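/- Let g be a Z-NF gflow of (G, I, O, λ) and u₀ ∈ Iᶜ ∩ Oᶜ with λ(u₀) = {X,Y}. Define g'(u) = g(u) if u = u₀ or u₀ ∉ g(u), and g'(u) = g(u) △ g(u₀) otherwise. Then g' is a Z-NF gflow of (G, I ∪ {u₀}, O, λ restricted accordingly), i.e., g'(u) ⊆ (I ∪ {u₀})ᶜ for all u ∈ Oᶜ and g' satisfies all gflow conditions and Z-normality. -/
import Mathlib


open scoped symmDiff

inductive Pauli | X | Y | Z
deriving DecidableEq

inductive MPlane | XY | XZ | YZ
deriving DecidableEq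

/-- The set of Pauli operators defining a measurement plane. -/
def MPlane.paulis : MPlane → Finset Pauli
  | .XY => {.X, .Y}
  | .XZ => {.X, .Z}
  | .YZ => {.Y, .Z}

variable {V : Type} [Fintype V] [DecidableEq V]

/-- Odd neighbourhood: vertices with an odd number of neighbours in `A`. -/
def oddNbhd (G : SimpleGraph V) [DecidableRel G.Adj] (A : Finset V) : Finset V :=
  Finset.univ.filter fun w => Odd (A.filter (G.Adj w)).card

/-- `f` is extensive w.r.t. the strict order `r`. -/
def IsExtensive (O : Finset V) (r : V → V → Prop) (f : V → Finset V) : Prop :=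
  ∀ u ∉ O, ∀ v ∈ f u, v ≠ u → r u v

/-- gflow of an extended open graph `(G, I, O, lam)`. -/
def IsGflow (G : SimpleGraph V) [DecidableRel G.Adj]
    (I O : Finset V) (lam : V → MPlane) (g : V → Finset V) : Prop :=
  (∀ u ∉ O, g u ⊆ Iᶜ) ∧
  (∃ r : V → V → Prop, IsStrictOrder V r ∧
    IsExtensive O r (fun u => g u ∪ oddNbhd G (g u))) ∧
  ∀ u ∉ O,
    (lam u = .XY → u ∈ oddNbhd G (g u) ∧ u ∉ g u) ∧
    (lam u = .XZ → u ∈ g u ∧ u ∈ oddNbhd G (g u)) ∧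
    (lam u = .YZ → u ∈ g u ∧ u ∉ oddNbhd G (g u))

/-- σ-normal forms for gflows. -/
def IsNF (σ : Pauli) (G : SimpleGraph V) [DecidableRel G.Adj]
    (O : Finset V) (g : V → Finset V) : Prop :=
  match σ with
  | .X => ∀ u ∉ O, oddNbhd G (g u) ⊆ insert u O
  | .Y => ∀ u ∉ O, (g u ∆ oddNbhd G (g u)) ⊆ insert u O
  | .Z => ∀ u ∉ O, g u ⊆ insert u O

/-- Turning a non-input {X,Y}-measured vertex of a Z-NF gflow into an input. -/
theorem ZNF_promote_input (G : SimpleGraph V) [DecidableRel G.Adj]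
    (I O : Finset V) (lam : V → MPlane) (g : V → Finset V)
    (hg : IsGflow G I O lam g) (hNF : IsNF .Z G O g)
    (u₀ : V) (hu₀I : u₀ ∉ I) (hu₀O : u₀ ∉ O) (hlam : lam u₀ = .XY)
    (g' : V → Finset V)
    (hg'₁ : ∀ u, (u = u₀ ∨ u₀ ∉ g u) → g' u = g u)
    (hg'₂ : ∀ u, u ≠ u₀ → u₀ ∈ g u → g' u = g u ∆ g u₀) :
    IsGflow G (insert u₀ I) O lam g' ∧ IsNF .Z G O g' := by
  obtain ⟨hgI, ⟨r, hr, hext⟩, hplane⟩ := hg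
  obtain ⟨hOddu₀, hnotu₀⟩ := (hplane u₀ hu₀O).1 hlam
  have hnot : ∀ u ∉ O, u ≠ u₀ → u₀ ∉ g u := by
    intro u huO hne hmem
    rcases Finset.mem_insert.1 (hNF u huO hmem) with h' | h'
    · exact hne h'.symm
    · exact hu₀O h'
  have key : ∀ u ∉ O, g' u = g u := by
    intro u huO
    by_cases h : u = u₀
    · exact hg'₁ u (Or.inl h)
    · exact hg'₁ u (Or.inr (hnot u huO h))
  refine ⟨⟨?_, ⟨r, hr, ?_⟩, ?_⟩, ?_⟩
  · intro u huO v hv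
    rw [key u huO] at hv
    rw [Finset.mem_compl, Finset.mem_insert]
    push_neg
    refine ⟨?_, Finset.mem_compl.1 (hgI u huO hv)⟩
    intro hh
    by_cases h : u = u₀
    · subst h; exact hnotu₀ (hh ▸ hv)
    · exact hnot u huO h (hh ▸ hv)
  · intro u huO v hv hvu
    simp only [key u huO] at hv
    exact hext u huO v hv hvu
  · intro u huO
    rw [key u huO]
    exact hplane u huO
  · intro u huO
    rw [key u huO]
    exact hNF u huO
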